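/- arXiv:2210.10577 — 4 statements merged into one kernel-verified Lean document; each statement's English description precedes it below -/
import Mathlib

section
/- For each positive integer n, the Fibonacci number F_n is the smallest positive integer m such that there is no set L ⊆ {1, ..., n−1} with no two consecutive elements (i.e., |i − j| ≠ 1 for all i, j ∈ L) satisfying m = ∑_{ℓ∈L} F_ℓ. -/
/-!
Shifting indices, `F k = fib (k + 1)` for `k ≥ 1`. By induction on `n`, sums of Fibonacci numbers
over sets of indices in `[1, n)` with no two consecutive elements are exactly the numbers
`m < F n`: the bound holds because deleting the top index `n - 1` leaves a set in `[1, n - 2)`,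
and for `m ≥ F (n - 1)` greedily taking the index `n - 1` leaves `m - F (n - 1) < F (n - 2)`.
-/

open Finset Nat

def NoConsecutive (L : Finset ℕ) : Prop := ∀ i ∈ L, i + 1 ∉ L

theorem NoConsecutive.mono {L L' : Finset ℕ} (h : NoConsecutive L) (hsub : L' ⊆ L) :
    NoConsecutive L' :=
  fun i hi hi' => h i (hsub hi) (hsub hi')

theorem NoConsecutive.insert {L : Finset ℕ} {k : ℕ} (h : NoConsecutive L)
    (hk : ∀ i ∈ L, i + 1 < k) : NoConsecutive (insert k L) := by
  intro i hi hi'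
  rcases mem_insert.1 hi with rfl | hi <;> rcases mem_insert.1 hi' with hi' | hi'
  · omega
  · have := hk _ hi'; omega
  · have := hk _ hi; omega
  · exact h i hi hi'

theorem noConsecutive_iff_natAbs_sub_ne_one {L : Finset ℕ} :
    NoConsecutive L ↔ ∀ i ∈ L, ∀ j ∈ L, ((i : ℤ) - (j : ℤ)).natAbs ≠ 1 := by
  constructor
  · intro h i hi j hj hij
    rcases Int.natAbs_eq_iff.1 hij with hij | hij
    · exact h j hj (by rwa [show j + 1 = i by omega])
    · exact h i hi (by rwa [show i + 1 = j by omega])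
  · intro h i hi hi'
    exact h (i + 1) hi' i hi (by omega)

theorem sum_fib_lt_of_noConsecutive :
    ∀ {n : ℕ} {L : Finset ℕ}, L ⊆ Ico 1 n → NoConsecutive L →
      ∑ i ∈ L, fib (i + 1) < fib (n + 1)
  | 0, L, hL, _ => by simp [subset_empty.1 hL]
  | 1, L, hL, _ => by simp [subset_empty.1 hL]
  | n + 2, L, hL, hnc => by
    by_cases htop : n + 1 ∈ L
    · have hrest : L.erase (n + 1) ⊆ Ico 1 n := by
        intro i hi
        have hiL := mem_Ico.1 (hL (mem_of_mem_erase hi))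
        have hin : i ≠ n := fun hin => hnc i (mem_of_mem_erase hi) (hin ▸ htop)
        exact mem_Ico.2 ⟨hiL.1, by have := ne_of_mem_erase hi; omega⟩
      have hlt := sum_fib_lt_of_noConsecutive hrest (hnc.mono (erase_subset _ _))
      have hrec : fib (n + 2 + 1) = fib (n + 1) + fib (n + 1 + 1) := fib_add_two
      rw [← add_sum_erase L _ htop, hrec]
      omega
    · have hrest : L ⊆ Ico 1 (n + 1) := by
        intro i hi
        have hiL := mem_Ico.1 (hL hi)
        exact mem_Ico.2 ⟨hiL.1, by have : i ≠ n + 1 := fun h => htop (h ▸ hi); omega⟩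
      calc ∑ i ∈ L, fib (i + 1) < fib (n + 2) := sum_fib_lt_of_noConsecutive hrest hnc
        _ ≤ fib (n + 3) := fib_le_fib_succ

theorem exists_noConsecutive_sum_fib_eq :
    ∀ {n m : ℕ}, m < fib (n + 1) →
      ∃ L ⊆ Ico 1 n, NoConsecutive L ∧ ∑ i ∈ L, fib (i + 1) = m
  | 0, m, hm => ⟨∅, by simp_all [NoConsecutive]⟩
  | 1, m, hm => ⟨∅, by simp_all [NoConsecutive]⟩
  | n + 2, m, hm => by
    by_cases hsmall : m < fib (n + 2)
    · obtain ⟨L, hL, hnc, hsum⟩ := exists_noConsecutive_sum_fib_eq hsmall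
      exact ⟨L, hL.trans (Ico_subset_Ico_right (by omega)), hnc, hsum⟩
    · have hrest : m - fib (n + 2) < fib (n + 1) := by
        have hrec : fib (n + 2 + 1) = fib (n + 1) + fib (n + 2) := fib_add_two
        omega
      obtain ⟨L, hL, hnc, hsum⟩ := exists_noConsecutive_sum_fib_eq hrest
      have hbelow : ∀ i ∈ L, i + 1 < n + 1 := fun i hi => by have := mem_Ico.1 (hL hi); omega
      refine ⟨insert (n + 1) L, ?_, hnc.insert hbelow, ?_⟩
      · exact insert_subset (mem_Ico.2 ⟨by omega, by omega⟩)
          (hL.trans (Ico_subset_Ico_right (by omega)))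
      · have hnotin : n + 1 ∉ L := fun h => by have := hbelow _ h; omega
        rw [sum_insert hnotin, hsum]
        exact Nat.add_sub_of_le (not_lt.1 hsmall)

theorem eq_fib_add_one_of_fib_rec (F : ℕ → ℕ) (hF1 : F 1 = 1) (hF2 : F 2 = 2)
    (hFrec : ∀ n, 3 ≤ n → F n = F (n - 1) + F (n - 2)) :
    ∀ n, 1 ≤ n → F n = fib (n + 1)
  | 1, _ => by simp [hF1]
  | 2, _ => by simp [hF2, fib_add_two]
  | n + 3, _ => by
    rw [hFrec (n + 3) (by omega), fib_add_two]
    show F (n + 2) + F (n + 1) = _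
    rw [eq_fib_add_one_of_fib_rec F hF1 hF2 hFrec (n + 2) (by omega),
      eq_fib_add_one_of_fib_rec F hF1 hF2 hFrec (n + 1) (by omega), add_comm]

theorem fibonacci_is_least_nondecomposable
    (F : ℕ → ℕ) (hF1 : F 1 = 1) (hF2 : F 2 = 2)
    (hFrec : ∀ n, 3 ≤ n → F n = F (n - 1) + F (n - 2))
    (n : ℕ) (hn : 1 ≤ n) :
    IsLeast {m | 0 < m ∧
      ¬ ∃ L : Finset ℕ, L ⊆ Finset.Icc 1 (n - 1) ∧
        (∀ i ∈ L, ∀ j ∈ L, ((i : ℤ) - (j : ℤ)).natAbs ≠ 1) ∧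
        m = ∑ ℓ ∈ L, F ℓ} (F n) := by
  have hF := eq_fib_add_one_of_fib_rec F hF1 hF2 hFrec
  have hIcc : Icc 1 (n - 1) = Ico 1 n := by ext; simp only [mem_Icc, mem_Ico]; omega
  have hsum : ∀ L ⊆ Ico 1 n, ∑ ℓ ∈ L, F ℓ = ∑ ℓ ∈ L, fib (ℓ + 1) :=
    fun L hL => sum_congr rfl fun ℓ hℓ => hF ℓ (mem_Ico.1 (hL hℓ)).1
  simp only [hIcc, ← noConsecutive_iff_natAbs_sub_ne_one, hF n hn]
  refine ⟨⟨fib_pos.2 (by omega), ?_⟩, ?_⟩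
  · rintro ⟨L, hL, hnc, heq⟩
    have := sum_fib_lt_of_noConsecutive hL hnc
    rw [hsum L hL] at heq
    omega
  · rintro m ⟨hm, hnot⟩
    by_contra! hlt
    obtain ⟨L, hL, hnc, rfl⟩ := exists_noConsecutive_sum_fib_eq hlt
    exact hnot ⟨L, hL, hnc, (hsum L hL).symm⟩
end

section
/- Let S be a finite non-empty set of positive integers with k = max S, and let (a_n)_{n≥1} be the S-LID sequence. Then for all integers n ≥ k + 1, a_{n+1} ≥ a_n + a_{n−k}. -/
/-!
If `a (n + 1) < a n + a (n - k)`, then `a (n + 1)` is already representable with the terms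
`a 1, …, a n`, which contradicts its definition. Either `a (n + 1) < a n`, and minimality of `a n`
represents it with earlier terms; or the excess `a (n + 1) - a n` is smaller than `a (n - k)`, so it
is represented by indices below `n - k`, and adding the index `n` keeps the set legal because all
new differences exceed `k = max S`.
-/

/-- `L` is an `S`-legal index set: all pairwise index differences avoid `S`. -/
def SlidLegal (S : Set ℕ) (L : Finset ℕ) : Prop :=
  ∀ i ∈ L, ∀ j ∈ L, ((i : ℤ) - (j : ℤ)).natAbs ∉ S

/-- `m` has an `S`-LID decomposition using the terms `a 1, …, a n`. -/
def SlidDecomp (S : Set ℕ) (a : ℕ → ℕ) (n m : ℕ) : Prop :=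
  ∃ L : Finset ℕ, L ⊆ Finset.Icc 1 n ∧ SlidLegal S L ∧ m = ∑ ℓ ∈ L, a ℓ

/-- `a` is the `S`-LID sequence (indexed from `1`; `a 0` is unconstrained):
for each `n ≥ 1`, `a n` is the least positive integer with no `S`-LID
decomposition using `a 1, …, a (n-1)`. -/
def IsSlidSeq (S : Set ℕ) (a : ℕ → ℕ) : Prop :=
  ∀ n, 1 ≤ n → IsLeast {m | 0 < m ∧ ¬ SlidDecomp S a (n - 1) m} (a n)

variable {S : Set ℕ} {a : ℕ → ℕ}

lemma SlidLegal.insert {L : Finset ℕ} {n : ℕ} (hL : SlidLegal S L) (h0 : 0 ∉ S)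
    (hn : ∀ ℓ ∈ L, ((n : ℤ) - ℓ).natAbs ∉ S) : SlidLegal S (insert n L) := by
  intro i hi j hj
  rcases Finset.mem_insert.mp hi with rfl | hiL <;> rcases Finset.mem_insert.mp hj with rfl | hjL
  · simpa using h0
  · exact hn j hjL
  · rw [← Int.natAbs_neg, neg_sub]
    exact hn i hiL
  · exact hL i hiL j hjL

namespace SlidDecomp

lemma zero (n : ℕ) : SlidDecomp S a n 0 :=
  ⟨∅, Finset.empty_subset _, by simp [SlidLegal], by simp⟩

lemma mono {n n' m : ℕ} (h : SlidDecomp S a n m) (hn : n ≤ n') : SlidDecomp S a n' m := by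
  obtain ⟨L, hL, hleg, hsum⟩ := h
  exact ⟨L, hL.trans (Finset.Icc_subset_Icc_right hn), hleg, hsum⟩

lemma add_of_far {j k n m : ℕ} (h0 : 0 ∉ S) (hS : ∀ s ∈ S, s ≤ k) (hjn : j + k < n)
    (h : SlidDecomp S a j m) : SlidDecomp S a n (a n + m) := by
  obtain ⟨L, hL, hleg, hsum⟩ := h
  have hbound : ∀ ℓ ∈ L, 1 ≤ ℓ ∧ ℓ ≤ j := fun ℓ hℓ => Finset.mem_Icc.mp (hL hℓ)
  have hnL : n ∉ L := fun hnL => by have := hbound n hnL; omega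
  refine ⟨insert n L, ?_, ?_, ?_⟩
  · exact Finset.insert_subset (Finset.mem_Icc.mpr ⟨by omega, le_rfl⟩)
      (hL.trans (Finset.Icc_subset_Icc_right (by omega)))
  · refine hleg.insert h0 fun ℓ hℓ hmem => ?_
    have := hS _ hmem
    have := hbound ℓ hℓ
    omega
  · rw [Finset.sum_insert hnL, hsum]

end SlidDecomp

namespace IsSlidSeq

lemma not_slidDecomp (ha : IsSlidSeq S a) (n : ℕ) : ¬ SlidDecomp S a n (a (n + 1)) :=
  (ha (n + 1) (Nat.le_add_left 1 n)).1.2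

lemma slidDecomp_of_lt (ha : IsSlidSeq S a) {j m : ℕ} (hj : 1 ≤ j) (hm : m < a j) :
    SlidDecomp S a (j - 1) m := by
  rcases Nat.eq_zero_or_pos m with rfl | hm0
  · exact SlidDecomp.zero _
  · by_contra h
    exact ((ha j hj).2 ⟨hm0, h⟩).not_gt hm

end IsSlidSeq

theorem slid_fundamental_lower_bound
    (S : Finset ℕ) (hne : S.Nonempty) (hpos : ∀ s ∈ S, 0 < s)
    (k : ℕ) (hk : k = S.max' hne)
    (a : ℕ → ℕ) (ha : IsSlidSeq ↑S a) :
    ∀ n, k + 1 ≤ n → a n + a (n - k) ≤ a (n + 1) := by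
  intro n hn
  by_contra! hlt
  apply ha.not_slidDecomp n
  rcases lt_or_ge (a (n + 1)) (a n) with h | h
  · exact (ha.slidDecomp_of_lt (by omega) h).mono (Nat.sub_le n 1)
  · have hexcess : SlidDecomp (↑S) a (n - k - 1) (a (n + 1) - a n) :=
      ha.slidDecomp_of_lt (by omega) (by omega)
    have h0 : 0 ∉ (↑S : Set ℕ) := fun h0 => (hpos 0 h0).false
    have hS : ∀ s ∈ (↑S : Set ℕ), s ≤ k := fun s hs => hk ▸ S.le_max' s hs
    simpa [Nat.add_sub_cancel' h] using
      hexcess.add_of_far h0 hS (show n - k - 1 + k < n by omega)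
end

section
/- The {1}-LID sequence (a_n)_{n≥1} satisfies a_n = F_n for all positive integers n, where F_1 = 1, F_2 = 2, and F_n = F_{n−1} + F_{n−2} for n ≥ 3. -/
/-!
Write `F n = fib (n + 1)`. A `{1}`-legal index set is one without two consecutive indices.
Splitting on whether the top index `n + 1` is used, the values decomposable with
`F 1, …, F (n + 1)` are those decomposable with `F 1, …, F n`, together with `F (n + 1)` plus those
decomposable with `F 1, …, F (n - 1)`. By induction they form exactly the interval
`[0, F (n + 2))`, so `F` satisfies the defining recursion of the `{1}`-LID sequence, and that
recursion determines the sequence uniquely.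
-/

open Finset Nat

theorem slidDecomp_congr {S : Set ℕ} {a b : ℕ → ℕ} {n : ℕ} (h : ∀ i ∈ Icc 1 n, a i = b i)
    (m : ℕ) : SlidDecomp S a n m ↔ SlidDecomp S b n m := by
  refine exists_congr fun L => and_congr_right fun hL => and_congr_right fun _ => ?_
  rw [sum_congr rfl fun i hi => h i (hL hi)]

theorem IsSlidSeq.unique {S : Set ℕ} {a b : ℕ → ℕ} (ha : IsSlidSeq S a) (hb : IsSlidSeq S b) :
    ∀ n, 1 ≤ n → a n = b n := by
  intro n
  induction n using Nat.strong_induction_on with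
  | _ n ih =>
    intro hn
    have hagree : ∀ i ∈ Icc 1 (n - 1), a i = b i := fun i hi => by
      rw [mem_Icc] at hi
      exact ih i (by omega) hi.1
    refine (ha n hn).unique ?_
    simpa only [slidDecomp_congr hagree] using hb n hn

theorem slidLegal_one_iff {L : Finset ℕ} : SlidLegal {1} L ↔ ∀ i ∈ L, i + 1 ∉ L := by
  constructor
  · intro h i hi hi1
    exact h (i + 1) hi1 i hi (by simp)
  · intro h i hi j hj hij
    rw [Set.mem_singleton_iff] at hij
    rcases (by omega : i = j + 1 ∨ j = i + 1) with rfl | rfl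
    · exact h j hj hi
    · exact h i hi hj

theorem slidDecomp_zero_iff {S : Set ℕ} {a : ℕ → ℕ} {m : ℕ} : SlidDecomp S a 0 m ↔ m = 0 := by
  constructor
  · rintro ⟨L, hL, -, rfl⟩
    simp [subset_empty.mp (by simpa using hL)]
  · rintro rfl
    exact ⟨∅, empty_subset _, by simp [SlidLegal], by simp⟩

/-- For `n = 0` the second alternative reads `m = a 1`, because `0 - 1 = 0` in `ℕ`. -/
theorem slidDecomp_one_succ_iff {a : ℕ → ℕ} {n m : ℕ} :
    SlidDecomp {1} a (n + 1) m ↔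
      SlidDecomp {1} a n m ∨ ∃ m', SlidDecomp {1} a (n - 1) m' ∧ m = m' + a (n + 1) := by
  simp only [SlidDecomp, slidLegal_one_iff]
  constructor
  · rintro ⟨L, hL, hleg, rfl⟩
    by_cases htop : n + 1 ∈ L
    · refine Or.inr ⟨_, ⟨L.erase (n + 1), fun x hx => ?_,
        fun i hi hi1 => hleg i (mem_of_mem_erase hi) (mem_of_mem_erase hi1), rfl⟩,
        (sum_erase_add _ _ htop).symm⟩
      have hxL := mem_of_mem_erase hx
      have hxn : x ≠ n := by rintro rfl; exact hleg x hxL htop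
      have := hL hxL
      simp only [mem_Icc, mem_erase] at this hx ⊢
      omega
    · refine Or.inl ⟨L, fun x hx => ?_, hleg, rfl⟩
      have hxn : x ≠ n + 1 := by rintro rfl; exact htop hx
      have := hL hx
      simp only [mem_Icc] at this ⊢
      omega
  · rintro (⟨L, hL, hleg, rfl⟩ | ⟨_, ⟨L, hL, hleg, rfl⟩, rfl⟩)
    · exact ⟨L, hL.trans (Icc_subset_Icc_right (by omega)), hleg, rfl⟩
    · have hbound : ∀ x ∈ L, 1 ≤ x ∧ x + 2 ≤ n + 1 := fun x hx => by
        have := hL hx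
        simp only [mem_Icc] at this
        omega
      have htop : n + 1 ∉ L := fun h => by have := hbound _ h; omega
      refine ⟨insert (n + 1) L, insert_subset (by simp) fun x hx => ?_, fun i hi hi1 => ?_,
        by rw [sum_insert htop, add_comm]⟩
      · have := hbound x hx
        simp only [mem_Icc]
        omega
      · rw [mem_insert] at hi hi1
        rcases hi with rfl | hi <;> rcases hi1 with hi1 | hi1
        · omega
        · have := hbound _ hi1; omega
        · have := hbound _ hi; omega
        · exact hleg i hi hi1

theorem slidDecomp_one_fib_iff (n m : ℕ) :
    SlidDecomp {1} (fun ℓ => fib (ℓ + 1)) n m ↔ m < fib (n + 2) := by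
  match n with
  | 0 => simp [slidDecomp_zero_iff]
  | n + 1 =>
    rw [slidDecomp_one_succ_iff, slidDecomp_one_fib_iff n, exists_congr fun m' => and_congr_left'
      (slidDecomp_one_fib_iff (n - 1) m')]
    -- `fib (n - 1 + 2) = fib (n + 1)` also for `n = 0`, since `fib 1 = fib 2`
    have hprev : fib (n - 1 + 2) + fib (n + 2) = fib (n + 3) := by
      rcases n with _ | n
      · rfl
      · exact fib_add_two.symm
    show (m < fib (n + 2) ∨ ∃ m', m' < fib (n - 1 + 2) ∧ m = m' + fib (n + 2)) ↔
      m < fib (n + 3)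
    constructor
    · rintro (h | ⟨m', hm', rfl⟩) <;> omega
    · intro h
      by_cases hm : m < fib (n + 2)
      · exact Or.inl hm
      · exact Or.inr ⟨m - fib (n + 2), by omega, by omega⟩

theorem isSlidSeq_one_fib : IsSlidSeq {1} (fun n => fib (n + 1)) := by
  rintro n hn
  obtain ⟨k, rfl⟩ : ∃ k, n = k + 1 := ⟨n - 1, by omega⟩
  simp only [add_tsub_cancel_right, slidDecomp_one_fib_iff, not_lt]
  exact ⟨⟨fib_pos.mpr (by omega), le_rfl⟩, fun m hm => hm.2⟩

theorem eq_fib_succ_of_rec {F : ℕ → ℕ} (hF1 : F 1 = 1) (hF2 : F 2 = 2)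
    (hFrec : ∀ n, 3 ≤ n → F n = F (n - 1) + F (n - 2)) : ∀ n, 1 ≤ n → F n = fib (n + 1)
  | 1, _ => hF1
  | 2, _ => hF2
  | n + 3, _ => by
    rw [hFrec (n + 3) (by omega), show n + 3 - 1 = n + 2 from rfl, show n + 3 - 2 = n + 1 from rfl,
      eq_fib_succ_of_rec hF1 hF2 hFrec (n + 2) (by omega),
      eq_fib_succ_of_rec hF1 hF2 hFrec (n + 1) (by omega), fib_add_two (n := n + 2), add_comm]

theorem one_slid_is_fibonacci
    (F : ℕ → ℕ) (hF1 : F 1 = 1) (hF2 : F 2 = 2)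
    (hFrec : ∀ n, 3 ≤ n → F n = F (n - 1) + F (n - 2))
    (a : ℕ → ℕ) (ha : IsSlidSeq {1} a) :
    ∀ n, 1 ≤ n → a n = F n := fun n hn => by
  rw [ha.unique isSlidSeq_one_fib n hn, eq_fib_succ_of_rec hF1 hF2 hFrec n hn]
end

section
/- Let T be a finite non-empty set of positive integers with c = max T. For each integer k > c, let (a^{(k)}_n)_{n≥1} denote the S_k-LID sequence for S_k = {1,...,k} \ {k − t : t ∈ T}. Then: (1) for every k > c, a^{(k)}_n = n for all 1 ≤ n ≤ k − c + 1; and (2) for every integer i, there exists an integer f (independent of k) such that a^{(k)}_{k+i} = k + f for all integers k ≥ i + 2c − 1 with k > c and k + i ≥ 1. -/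
/-! Proof idea: in `S_k` every difference below `k - c` is forbidden, while `k - c` itself is
allowed. Hence legal index sets below `k - c + 2` are singletons, which forces `a n = n`
there, and legal index sets below `2 (k - c) + 2` have at most two elements. Writing the next terms
as `a (k - c + 2 + p) = k + g p`, the decomposable values `k + z` above `k - c + 1` are then
described by a finite rule in `g`, `T` and `c` alone; so `g m` is the least `z ≥ 2 - c` not
produced by `g 0, …, g (m - 1)`, and by induction on `m` it does not depend on `k`. -/

section Decomposition

variable {S : Set ℕ} {a : ℕ → ℕ} {N : ℕ}

theorem slidDecomp_single (h0 : 0 ∉ S) {x : ℕ} (hx : 1 ≤ x) (hxN : x ≤ N) :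
    SlidDecomp S a N (a x) := by
  refine ⟨{x}, by simp [hx, hxN], ?_, by simp⟩
  intro i hi j hj
  simp only [Finset.mem_singleton] at hi hj
  simpa [hi, hj] using h0

theorem slidDecomp_pair (h0 : 0 ∉ S) {x y : ℕ} (hx : 1 ≤ x) (hxy : x < y) (hyN : y ≤ N)
    (hS : y - x ∉ S) : SlidDecomp S a N (a x + a y) := by
  refine ⟨{x, y}, ?_, ?_, (Finset.sum_pair hxy.ne).symm⟩
  · intro z hz
    simp only [Finset.mem_insert, Finset.mem_singleton] at hz
    rcases hz with rfl | rfl <;> simp only [Finset.mem_Icc] <;> omega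
  · intro i hi j hj
    simp only [Finset.mem_insert, Finset.mem_singleton] at hi hj
    have hyx : ((y : ℤ) - x).natAbs = y - x := by omega
    have hxy' : ((x : ℤ) - y).natAbs = y - x := by omega
    rcases hi with rfl | rfl <;> rcases hj with rfl | rfl <;> simpa [hyx, hxy'] using ‹_›

/-- If all differences below `g` are forbidden, a legal set of indices in `[1, 2g]` has at
most two elements. -/
theorem slidDecomp_iff_of_le_two_mul {g : ℕ} (h0 : 0 ∉ S) (hS : ∀ d, 0 < d → d < g → d ∈ S)
    (hN : N ≤ 2 * g) {w : ℕ} :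
    SlidDecomp S a N w ↔ w = 0 ∨ (∃ x, 1 ≤ x ∧ x ≤ N ∧ w = a x) ∨
      ∃ x y, 1 ≤ x ∧ x < y ∧ y ≤ N ∧ y - x ∉ S ∧ w = a x + a y := by
  constructor
  · rintro ⟨L, hLN, hL, rfl⟩
    have hmem : ∀ x ∈ L, 1 ≤ x ∧ x ≤ N := fun x hx => Finset.mem_Icc.mp (hLN hx)
    have hgap : ∀ x ∈ L, ∀ y ∈ L, x ≠ y → g ≤ ((x : ℤ) - y).natAbs := fun x hx y hy hxy =>
      le_of_not_gt fun h => hL x hx y hy (hS _ (by omega) h)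
    have hcard : L.card ≤ 2 := by
      by_contra! h
      obtain ⟨x, hx, y, hy, z, hz, hxy, hxz, hyz⟩ := Finset.two_lt_card.mp h
      have := hgap x hx y hy hxy
      have := hgap x hx z hz hxz
      have := hgap y hy z hz hyz
      have := hmem x hx; have := hmem y hy; have := hmem z hz
      omega
    rcases (by omega : L.card = 0 ∨ L.card = 1 ∨ L.card = 2) with h | h | h
    · simp [Finset.card_eq_zero.mp h]
    · obtain ⟨x, rfl⟩ := Finset.card_eq_one.mp h
      have := hmem x (Finset.mem_singleton_self x)
      exact Or.inr (Or.inl ⟨x, this.1, this.2, Finset.sum_singleton _ _⟩)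
    · obtain ⟨x, y, hxy, rfl⟩ := Finset.card_eq_two.mp h
      have hx := hmem x (by simp)
      have hy := hmem y (by simp)
      have hlegal := hL y (by simp) x (by simp)
      right; right
      rcases Nat.lt_or_gt_of_ne hxy with hlt | hlt
      · refine ⟨x, y, hx.1, hlt, hy.2, ?_, Finset.sum_pair hxy⟩
        rwa [show ((y : ℤ) - x).natAbs = y - x by omega] at hlegal
      · refine ⟨y, x, hy.1, hlt, hx.2, ?_, by rw [Finset.sum_pair hxy, add_comm]⟩
        rwa [← Int.natAbs_neg, show (-((y : ℤ) - x)).natAbs = x - y by omega] at hlegal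
  · rintro (rfl | ⟨x, hx, hxN, rfl⟩ | ⟨x, y, hx, hxy, hyN, hS, rfl⟩)
    · exact ⟨∅, by simp, by simp [SlidLegal], by simp⟩
    · exact slidDecomp_single h0 hx hxN
    · exact slidDecomp_pair h0 hx hxy hyN hS

end Decomposition

theorem IsSlidSeq.apply_eq_self_of_le {S : Set ℕ} {a : ℕ → ℕ} {g : ℕ} (ha : IsSlidSeq S a)
    (h0 : 0 ∉ S) (hS : ∀ d, 0 < d → d < g → d ∈ S) :
    ∀ n, 1 ≤ n → n ≤ g + 1 → a n = n := by
  intro n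
  induction n using Nat.strong_induction_on with
  | _ n ih =>
  intro hn hng
  have hdecomp : ∀ w, SlidDecomp S a (n - 1) w ↔ w < n := by
    intro w
    rw [slidDecomp_iff_of_le_two_mul h0 hS (by omega)]
    constructor
    · rintro (rfl | ⟨x, hx, hxn, rfl⟩ | ⟨x, y, hx, hxy, hyn, hyx, -⟩)
      · omega
      · rw [ih x (by omega) hx (by omega)]; omega
      · exact absurd (hS _ (by omega) (by omega)) hyx
    · intro hw
      rcases Nat.eq_zero_or_pos w with rfl | hw0
      · exact Or.inl rfl
      · exact Or.inr (Or.inl ⟨w, hw0, by omega, (ih w hw hw0 (by omega)).symm⟩)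
  refine (ha n hn).unique ⟨⟨hn, by simp [hdecomp]⟩, fun w hw => ?_⟩
  simpa [hdecomp] using hw.2

def forbiddenGaps (T : Finset ℕ) (k : ℕ) : Set ℕ :=
  Set.Icc 1 k \ ((fun t => k - t) '' ↑T)

section ForbiddenGaps

variable {T : Finset ℕ} {c k d : ℕ}

theorem zero_notMem_forbiddenGaps : 0 ∉ forbiddenGaps T k := fun h => by
  simp [forbiddenGaps] at h

theorem mem_forbiddenGaps_of_lt (hT : ∀ t ∈ T, t ≤ c) (hd : 0 < d) (hdk : d < k - c) :
    d ∈ forbiddenGaps T k := by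
  refine ⟨Set.mem_Icc.mpr ⟨hd, by omega⟩, ?_⟩
  rintro ⟨t, ht, rfl⟩
  dsimp only at hdk
  have := hT t ht
  omega

theorem sub_notMem_forbiddenGaps {t : ℕ} (ht : t ∈ T) : k - t ∉ forbiddenGaps T k :=
  fun h => h.2 ⟨t, ht, rfl⟩

theorem notMem_forbiddenGaps_of_lt (h : k < d) : d ∉ forbiddenGaps T k :=
  fun hd => absurd (Set.mem_Icc.mp hd.1).2 (by omega)

theorem exists_sub_eq_of_notMem_forbiddenGaps (hd : 0 < d) (hdk : d ≤ k)
    (h : d ∉ forbiddenGaps T k) : ∃ t ∈ T, k - t = d := by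
  by_contra! hne
  exact h ⟨Set.mem_Icc.mpr ⟨hd, hdk⟩, fun ⟨t, ht, he⟩ => hne t ht he⟩

end ForbiddenGaps

/-- The paper's `f_i` for `i = 2 - c + p`. -/
def fringeOffset (c k : ℕ) (a : ℕ → ℕ) (p : ℕ) : ℤ :=
  a (k - c + 2 + p) - k

/-- `k + z` is an `S_k`-LID sum of terms of index `< k - c + 2 + m`, read off from `a n = n`
for `n ≤ k - c + 1` and `a (k - c + 2 + p) = k + g p`: the disjuncts are the index pair
`(1, k - c + 1)`, the single index `y = k - c + 2 + p`, and the pairs `(x, y)` with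
`y - x = k - t` or `y - x > k`. -/
def FringeDecomp (T : Finset ℕ) (c : ℕ) (g : ℕ → ℤ) (m : ℕ) (z : ℤ) : Prop :=
  z = 2 - c ∨ ∃ p < m, z = g p ∨
    (∃ t ∈ T, 1 ≤ 2 - (c : ℤ) + p + t ∧ z = 2 - c + p + t + g p) ∨
    ∃ x : ℤ, 1 ≤ x ∧ x ≤ 1 - c + p ∧ z = g p + x

section Fringe

variable {T : Finset ℕ} {c k m : ℕ} {a : ℕ → ℕ}

theorem fringeDecomp_congr {g g' : ℕ → ℤ} (h : ∀ p < m, g p = g' p) :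
    FringeDecomp T c g m = FringeDecomp T c g' m := by
  ext z
  refine or_congr_right (exists_congr fun p => and_congr_right fun hp => ?_)
  rw [h p hp]

theorem IsSlidSeq.apply_eq_self_of_le_sub (hT : ∀ t ∈ T, t ≤ c)
    (ha : IsSlidSeq (forbiddenGaps T k) a) : ∀ n, 1 ≤ n → n ≤ k - c + 1 → a n = n :=
  ha.apply_eq_self_of_le zero_notMem_forbiddenGaps fun _ => mem_forbiddenGaps_of_lt hT

theorem slidDecomp_of_fringeDecomp (hT : ∀ t ∈ T, t ≤ c) (hcT : c ∈ T) (hmk : m + c + 1 ≤ k)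
    (hinit : ∀ x, 1 ≤ x → x ≤ k - c + 1 → a x = x) {w : ℕ}
    (h : FringeDecomp T c (fringeOffset c k a) m (w - k)) :
    SlidDecomp (forbiddenGaps T k) a (k - c + 1 + m) w := by
  have h0 : 0 ∉ forbiddenGaps T k := zero_notMem_forbiddenGaps
  unfold FringeDecomp fringeOffset at h
  rcases h with hz | ⟨p, hp, hz | ⟨t, ht, ht1, hz⟩ | ⟨x, hx1, hx2, hz⟩⟩
  · have hw : w = a 1 + a (k - c + 1) := by
      rw [hinit 1 le_rfl (by omega), hinit (k - c + 1) (by omega) le_rfl]; omega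
    rw [hw]
    refine slidDecomp_pair h0 le_rfl (by omega) (by omega) ?_
    rw [show k - c + 1 - 1 = k - c by omega]
    exact sub_notMem_forbiddenGaps hcT
  · rw [show w = a (k - c + 2 + p) by omega]
    exact slidDecomp_single h0 (by omega) (by omega)
  · have htc := hT t ht
    set x := (2 - (c : ℤ) + p + t).toNat
    have hw : w = a x + a (k - c + 2 + p) := by rw [hinit x (by omega) (by omega)]; omega
    rw [hw]
    refine slidDecomp_pair h0 (by omega) (by omega) (by omega) ?_
    rw [show k - c + 2 + p - x = k - t by omega]
    exact sub_notMem_forbiddenGaps ht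
  · have hw : w = a x.toNat + a (k - c + 2 + p) := by
      rw [hinit x.toNat (by omega) (by omega)]; omega
    rw [hw]
    exact slidDecomp_pair h0 (by omega) (by omega) (by omega)
      (notMem_forbiddenGaps_of_lt (by omega))

theorem fringeDecomp_of_slidDecomp (hT : ∀ t ∈ T, t ≤ c) (hmk : m + c + 1 ≤ k)
    (hinit : ∀ x, 1 ≤ x → x ≤ k - c + 1 → a x = x) {w : ℕ} (hw : k - c + 1 < w)
    (h : SlidDecomp (forbiddenGaps T k) a (k - c + 1 + m) w) :
    FringeDecomp T c (fringeOffset c k a) m (w - k) := by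
  have hgap : ∀ d, 0 < d → d < k - c → d ∈ forbiddenGaps T k :=
    fun d => mem_forbiddenGaps_of_lt hT
  rw [slidDecomp_iff_of_le_two_mul zero_notMem_forbiddenGaps hgap (by omega)] at h
  unfold FringeDecomp fringeOffset
  rcases h with rfl | ⟨y, hy1, hyN, rfl⟩ | ⟨x, y, hx1, hxy, hyN, hyx, rfl⟩
  · omega
  · by_cases hy : y ≤ k - c + 1
    · rw [hinit y hy1 hy] at hw; omega
    · exact Or.inr ⟨y - (k - c + 2), by omega, Or.inl (by congr 3; omega)⟩
  · have hfar : k - c ≤ y - x := le_of_not_gt fun h => hyx (hgap _ (by omega) h)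
    by_cases hy : y ≤ k - c + 1
    · left
      rw [hinit x hx1 (by omega), hinit y (by omega) hy]
      omega
    have hx : x ≤ k - c + 1 := by omega
    have hp : y = k - c + 2 + (y - (k - c + 2)) := by omega
    rw [hinit x hx1 hx, hp]
    refine Or.inr ⟨y - (k - c + 2), by omega, Or.inr ?_⟩
    rcases le_or_gt (y - x) k with hyk | hyk
    · obtain ⟨t, ht, hkt⟩ := exists_sub_eq_of_notMem_forbiddenGaps (by omega) hyk hyx
      have htc := hT t ht
      exact Or.inl ⟨t, ht, by omega, by push_cast; omega⟩
    · exact Or.inr ⟨x, by omega, by omega, by push_cast; omega⟩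

theorem isLeast_fringeOffset (hT : ∀ t ∈ T, t ≤ c) (hcT : c ∈ T)
    (ha : IsSlidSeq (forbiddenGaps T k) a) (hmk : m + c + 1 ≤ k) :
    IsLeast {z : ℤ | 2 - c ≤ z ∧ ¬ FringeDecomp T c (fringeOffset c k a) m z}
      (fringeOffset c k a m) := by
  have hinit := ha.apply_eq_self_of_le_sub hT
  obtain ⟨⟨hpos, hnd⟩, hleast⟩ := ha (k - c + 2 + m) (by omega)
  rw [show k - c + 2 + m - 1 = k - c + 1 + m by omega] at hnd hleast
  have hbig : k - c + 1 < a (k - c + 2 + m) := by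
    by_contra! h
    refine hnd ?_
    rw [← hinit _ hpos h]
    exact slidDecomp_single zero_notMem_forbiddenGaps hpos (by omega)
  refine ⟨⟨by unfold fringeOffset; omega,
    fun h => hnd (slidDecomp_of_fringeDecomp hT hcT hmk hinit h)⟩, fun z ⟨hz, hnz⟩ => ?_⟩
  have hw : (((k + z).toNat : ℕ) : ℤ) - k = z := by omega
  have hnd' : ¬ SlidDecomp (forbiddenGaps T k) a (k - c + 1 + m) (k + z).toNat := fun hd =>
    hnz (hw ▸ fringeDecomp_of_slidDecomp hT hmk hinit (by omega) hd)
  have := hleast ⟨by omega, hnd'⟩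
  unfold fringeOffset
  omega

theorem fringeOffset_eq_of_isSlidSeq (hT : ∀ t ∈ T, t ≤ c) (hcT : c ∈ T) {k' : ℕ}
    {a' : ℕ → ℕ} (ha : IsSlidSeq (forbiddenGaps T k) a) (ha' : IsSlidSeq (forbiddenGaps T k') a')
    (hk : m + c + 1 ≤ k) (hk' : m + c + 1 ≤ k') :
    fringeOffset c k a m = fringeOffset c k' a' m := by
  induction m using Nat.strong_induction_on with
  | _ m ih =>
  have hdecomp : FringeDecomp T c (fringeOffset c k a) m =
      FringeDecomp T c (fringeOffset c k' a') m :=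
    fringeDecomp_congr fun p hp => ih p hp (by omega) (by omega)
  have hleast := isLeast_fringeOffset hT hcT ha' hk'
  rw [← hdecomp] at hleast
  exact (isLeast_fringeOffset hT hcT ha hk).unique hleast

end Fringe

theorem initial_values_fixed_fringes_general
    (T : Finset ℕ) (hTne : T.Nonempty)
    (c : ℕ) (hc : c = T.max' hTne)
    (a : ℕ → ℕ → ℕ)
    (ha : ∀ k, c < k →
      IsSlidSeq (Set.Icc 1 k \ ((fun t => k - t) '' ↑T)) (a k)) :
    (∀ k, c < k → ∀ n, 1 ≤ n → n ≤ k - c + 1 → a k n = n) ∧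
    (∀ i : ℤ, ∃ f : ℤ, ∀ k : ℕ, c < k →
      i + 2 * (c : ℤ) - 1 ≤ (k : ℤ) → 1 ≤ (k : ℤ) + i →
      (a k ((k : ℤ) + i).toNat : ℤ) = (k : ℤ) + f) := by
  have hcT : c ∈ T := hc ▸ T.max'_mem hTne
  have hT : ∀ t ∈ T, t ≤ c := fun t ht => hc ▸ T.le_max' t ht
  have hinit (k : ℕ) (hk : c < k) := (ha k hk).apply_eq_self_of_le_sub hT
  refine ⟨hinit, fun i => ?_⟩
  rcases le_or_gt i (1 - c) with hi | hi
  · refine ⟨i, fun k hk _ hki => ?_⟩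
    have := hinit k hk (k + i).toNat (by omega) (by omega)
    omega
  · set m := (i + c - 2).toNat
    refine ⟨fringeOffset c (m + c + 1) (a (m + c + 1)) m, fun k hk hik _ => ?_⟩
    have hfix := fringeOffset_eq_of_isSlidSeq hT hcT (ha k hk) (ha (m + c + 1) (by omega))
      (by omega) le_rfl
    rw [show ((k : ℤ) + i).toNat = k - c + 2 + m by omega, ← hfix, fringeOffset]
    ring

theorem initial_values_fixed_fringes
    (T : Finset ℕ) (hTne : T.Nonempty) (hTpos : ∀ t ∈ T, 0 < t)
    (c : ℕ) (hc : c = T.max' hTne)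
    (a : ℕ → ℕ → ℕ)
    (ha : ∀ k, c < k →
      IsSlidSeq (Set.Icc 1 k \ ((fun t => k - t) '' ↑T)) (a k)) :
    (∀ k, c < k → ∀ n, 1 ≤ n → n ≤ k - c + 1 → a k n = n) ∧
    (∀ i : ℤ, ∃ f : ℤ, ∀ k : ℕ, c < k →
      i + 2 * (c : ℤ) - 1 ≤ (k : ℤ) → 1 ≤ (k : ℤ) + i →
      (a k ((k : ℤ) + i).toNat : ℤ) = (k : ℤ) + f) :=
  initial_values_fixed_fringes_general T hTne c hc a ha
end
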